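/- Let k ≥ 1 be an integer, m a nonzero complex number, n a positive integer, and b a complex number with b ∉ {0, -1, -2, …, -n}. Writing HP_{r}(n) = ∑_{i=1}^{n} 1/(i+b)^{r}, the partial sums of Lerch's Φ function satisfy: ∑_{j=1}^{n} e^{m(j+b)}/(j+b)^{k} = -e^{mb}/(2b^{k}) + e^{m(n+b)}/(2(n+b)^{k}) + (1/(2b^{k})) ∑_{j=0}^{k} (mb)^{j}/j! - (1/(2(n+b)^{k})) ∑_{j=0}^{k} (m(n+b))^{j}/j! + ∑_{j=1}^{k} (m^{k-j}/(k-j)!)·HP_{j}(n) + (m^{k}/(2(k-1)!)) ∫_{0}^{1} (1-u)^{k-1}·( e^{m(n+b)u} - e^{mbu} )·coth(mu/2) du. -/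

import Mathlib

/-!
With `x = exp (m u)` one has `coth (m u / 2) = (x + 1) / (x - 1)`, so away from the countable set
where `x = 1` the integrand is `(1 - u)^(k-1)` times
`2 ∑_{j=1}^n e^{m(j+b)u} - e^{m(n+b)u} + e^{mbu}`.
Each resulting integral is an integral Taylor remainder of `exp`:
`z^k ∫_0^1 (1 - u)^(k-1) e^{zu} du = (k-1)! (e^z - ∑_{r<k} z^r / r!)`.
At `z = m c`, dividing the truncated exponential sum by `c^k` and reflecting `r ↦ k - r` gives
`∑_{j=1}^k m^(k-j) / (k-j)! · c^(-j)`; summed over `c = i + b` these are the `HP_j(n)` terms.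
-/

open Complex

/-- The complex hyperbolic cotangent, `coth z = cosh z / sinh z`. -/
noncomputable def Complex.coth (z : ℂ) : ℂ := Complex.cosh z / Complex.sinh z

open Finset intervalIntegral Nat

theorem hasDerivAt_cexp_mul_ofReal (z : ℂ) (x : ℝ) :
    HasDerivAt (fun u : ℝ => exp (z * u)) (z * exp (z * x)) x := by
  simpa [mul_comm] using ((hasDerivAt_id x).ofReal_comp.const_mul z).cexp

theorem mul_integral_cexp_mul (z : ℂ) :
    z * ∫ u in (0 : ℝ)..1, exp (z * u) = exp z - 1 := by
  rw [← integral_const_mul, integral_eq_sub_of_hasDerivAt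
    (fun x _ => hasDerivAt_cexp_mul_ofReal z x) (Continuous.intervalIntegrable (by fun_prop) _ _)]
  simp

theorem mul_integral_one_sub_pow_succ_mul_cexp (z : ℂ) (K : ℕ) :
    z * ∫ u in (0 : ℝ)..1, (1 - (u : ℂ)) ^ (K + 1) * exp (z * u) =
      (K + 1) * (∫ u in (0 : ℝ)..1, (1 - (u : ℂ)) ^ K * exp (z * u)) - 1 := by
  have hpow (x : ℝ) : HasDerivAt (fun u : ℝ => (1 - (u : ℂ)) ^ (K + 1))
      (-(K + 1) * (1 - (x : ℂ)) ^ K) x := by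
    have h : HasDerivAt (fun w : ℂ => (1 - w) ^ (K + 1))
        (((K + 1 : ℕ) : ℂ) * (1 - (x : ℂ)) ^ K * (-1)) x :=
      ((hasDerivAt_id _).const_sub 1).pow (K + 1)
    convert h.comp_ofReal using 1
    push_cast; ring
  have hparts := integral_mul_deriv_eq_deriv_mul (a := 0) (b := 1)
    (fun x _ => hpow x) (fun x _ => hasDerivAt_cexp_mul_ofReal z x)
    (Continuous.intervalIntegrable (by fun_prop) _ _)
    (Continuous.intervalIntegrable (by fun_prop) _ _)
  simp only [ofReal_one, ofReal_zero, sub_self, sub_zero, mul_zero, exp_zero, one_pow,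
    zero_pow K.succ_ne_zero, zero_mul] at hparts
  have hconst : ∫ u in (0 : ℝ)..1, -(K + 1) * (1 - (u : ℂ)) ^ K * exp (z * u) =
      -((K + 1) * ∫ u in (0 : ℝ)..1, (1 - (u : ℂ)) ^ K * exp (z * u)) := by
    rw [← integral_const_mul, ← integral_neg]
    simp only [neg_mul, mul_assoc]
  rw [← integral_const_mul]
  simp only [mul_left_comm z]
  rw [hparts, hconst]
  ring

theorem pow_mul_integral_one_sub_pow_mul_cexp (z : ℂ) (K : ℕ) :
    z ^ (K + 1) * ∫ u in (0 : ℝ)..1, (1 - (u : ℂ)) ^ K * exp (z * u) =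
      K ! * (exp z - ∑ r ∈ range (K + 1), z ^ r / r !) := by
  induction K with
  | zero => simpa using mul_integral_cexp_mul z
  | succ K ih =>
    have hfac : ((K + 1) ! : ℂ) ≠ 0 := by exact_mod_cast (K + 1).factorial_ne_zero
    have hsucc : ((K + 1) ! : ℂ) = (K + 1) * K ! := by
      push_cast [Nat.factorial_succ]; ring
    rw [pow_succ, mul_assoc, mul_integral_one_sub_pow_succ_mul_cexp, sum_range_succ]
    linear_combination (K + 1 : ℂ) * ih + mul_div_cancel₀ (z ^ (K + 1)) hfac
      - (exp z - ∑ r ∈ range (K + 1), z ^ r / r !) * hsucc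

theorem one_div_pow_mul_sum_range_mul_pow_div_factorial (m : ℂ) {c : ℂ} (hc : c ≠ 0)
    (k : ℕ) :
    1 / c ^ k * ∑ r ∈ range k, (m * c) ^ r / r ! =
      ∑ j ∈ Icc 1 k, m ^ (k - j) / (k - j)! * (1 / c ^ j) := by
  let f : ℕ → ℂ := fun r => m ^ r / r ! * (1 / c ^ (k - r))
  calc _ = ∑ r ∈ range k, f r := by
        rw [mul_sum]
        refine sum_congr rfl fun r hr => ?_
        simp only [f]
        rw [mul_pow, ← pow_sub_mul_pow c (mem_range.1 hr).le]
        field_simp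
    _ = ∑ j ∈ Ico 1 (k + 1), f (k - j) := by
        rw [sum_Ico_reflect f 1 le_rfl, range_eq_Ico, Nat.add_sub_cancel, Nat.sub_self]
    _ = _ := by
        rw [Ico_add_one_right_eq_Icc]
        exact sum_congr rfl fun j hj => by simp only [f, Nat.sub_sub_self (mem_Icc.1 hj).2]

theorem pow_div_factorial_mul_integral_one_sub_pow_mul_cexp (m : ℂ) {c : ℂ} (hc : c ≠ 0)
    (K : ℕ) :
    m ^ (K + 1) / K ! * ∫ u in (0 : ℝ)..1, (1 - (u : ℂ)) ^ K * exp (m * c * u) =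
      exp (m * c) / c ^ (K + 1) -
        ∑ j ∈ Icc 1 (K + 1), m ^ (K + 1 - j) / (K + 1 - j)! * (1 / c ^ j) := by
  have hfac : (K ! : ℂ) ≠ 0 := by exact_mod_cast K.factorial_ne_zero
  have hI : m ^ (K + 1) * ∫ u in (0 : ℝ)..1, (1 - (u : ℂ)) ^ K * exp (m * c * u) =
      K ! * (exp (m * c) - ∑ r ∈ range (K + 1), (m * c) ^ r / r !) / c ^ (K + 1) := by
    rw [eq_div_iff (pow_ne_zero _ hc), mul_right_comm, ← mul_pow]
    exact pow_mul_integral_one_sub_pow_mul_cexp (m * c) K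
  rw [← one_div_pow_mul_sum_range_mul_pow_div_factorial m hc, div_mul_eq_mul_div, hI]
  field_simp

theorem pow_sub_one_mul_add_one {R : Type*} [CommRing R] (x : R) (n : ℕ) :
    (x ^ n - 1) * (x + 1) = (x - 1) * (2 * ∑ j ∈ Icc 1 n, x ^ j - x ^ n + 1) := by
  induction n with
  | zero => simp
  | succ n ih =>
    rw [sum_Icc_succ_top (by omega)]
    linear_combination ih

theorem Complex.coth_eq_exp_two_mul (w : ℂ) (h : exp (2 * w) ≠ 1) :
    coth w = (exp (2 * w) + 1) / (exp (2 * w) - 1) := by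
  have hY : exp w ≠ 0 := exp_ne_zero w
  have hsq : exp (2 * w) = exp w ^ 2 := by rw [two_mul, exp_add, sq]
  rw [hsq] at h ⊢
  have h' : exp w ^ 2 - 1 ≠ 0 := sub_ne_zero.2 h
  rw [coth, cosh, sinh, exp_neg]
  field_simp

theorem cexp_sub_cexp_mul_coth_eq_sum (m b : ℂ) (n : ℕ) (u : ℝ) (h : exp (m * u) ≠ 1) :
    (exp (m * (n + b) * u) - exp (m * b * u)) * coth (m * u / 2) =
      2 * ∑ j ∈ Icc 1 n, exp (m * (j + b) * u) - exp (m * (n + b) * u) + exp (m * b * u) := by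
  have hpow (j : ℕ) : exp (m * (j + b) * u) = exp (m * b * u) * exp (m * u) ^ j := by
    rw [← exp_nat_mul, ← exp_add]; ring_nf
  rw [coth_eq_exp_two_mul _ (by rwa [mul_div_cancel₀ _ two_ne_zero]),
    mul_div_cancel₀ _ two_ne_zero]
  simp only [hpow, ← mul_sum]
  rw [mul_div_assoc', div_eq_iff (sub_ne_zero.2 h)]
  linear_combination exp (m * b * u) * pow_sub_one_mul_add_one (exp (m * u)) n

theorem Complex.countable_setOf_exp_mul_ofReal_eq_one {m : ℂ} (hm : m ≠ 0) :
    {u : ℝ | exp (m * u) = 1}.Countable := by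
  refine ((Set.countable_range fun q : ℤ => q * (2 * Real.pi * I) / m).preimage
    ofReal_injective).mono fun u hu => ?_
  obtain ⟨q, hq⟩ := exp_eq_one_iff.1 hu
  exact ⟨q, by simp only; rw [← hq]; field_simp⟩

theorem integral_one_sub_pow_mul_exp_sub_exp_mul_coth (K : ℕ) {m : ℂ} (hm : m ≠ 0) (n : ℕ)
    (b : ℂ) :
    ∫ u in (0 : ℝ)..1,
        (1 - (u : ℂ)) ^ K * (exp (m * (n + b) * u) - exp (m * b * u)) * coth (m * u / 2) =
      2 * ∑ j ∈ Icc 1 n, (∫ u in (0 : ℝ)..1, (1 - (u : ℂ)) ^ K * exp (m * (j + b) * u))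
        - (∫ u in (0 : ℝ)..1, (1 - (u : ℂ)) ^ K * exp (m * (n + b) * u))
        + ∫ u in (0 : ℝ)..1, (1 - (u : ℂ)) ^ K * exp (m * b * u) := by
  have hae : ∀ᵐ u : ℝ, exp (m * u) ≠ 1 :=
    (countable_setOf_exp_mul_ofReal_eq_one hm).ae_notMem MeasureTheory.volume
  calc _ = ∫ u in (0 : ℝ)..1,
          (∑ j ∈ Icc 1 n, 2 * ((1 - (u : ℂ)) ^ K * exp (m * (j + b) * u)))
            - (1 - (u : ℂ)) ^ K * exp (m * (n + b) * u) + (1 - (u : ℂ)) ^ K * exp (m * b * u) :=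
        integral_congr_ae <| hae.mono fun u hu _ => by
          rw [mul_assoc, cexp_sub_cexp_mul_coth_eq_sum m b n u hu, ← mul_sum, ← mul_sum]
          ring
    _ = _ := by
      rw [integral_add, integral_sub, integral_finsetSum]
      · simp only [integral_const_mul, mul_sum]
      all_goals
        try intro _ _
        exact Continuous.intervalIntegrable (by fun_prop) _ _

theorem stmt_18_general (k : ℕ) (hk : 1 ≤ k) (m : ℂ) (hm : m ≠ 0) (n : ℕ)
    (b : ℂ) (hb : ∀ j : ℕ, j ≤ n → b ≠ -(j : ℂ)) :
    ∑ j ∈ Finset.Icc 1 n, Complex.exp (m * (j + b)) / ((j : ℂ) + b) ^ k =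
      -(Complex.exp (m * b) / (2 * b ^ k))
      + Complex.exp (m * ((n : ℂ) + b)) / (2 * ((n : ℂ) + b) ^ k)
      + (1 / (2 * b ^ k)) * ∑ j ∈ Finset.range (k + 1), (m * b) ^ j / (Nat.factorial j)
      - (1 / (2 * ((n : ℂ) + b) ^ k)) *
          ∑ j ∈ Finset.range (k + 1), (m * ((n : ℂ) + b)) ^ j / (Nat.factorial j)
      + (∑ j ∈ Finset.Icc 1 k,
          (m ^ (k - j) / (Nat.factorial (k - j))) *
            ∑ i ∈ Finset.Icc 1 n, (1 : ℂ) / ((i : ℂ) + b) ^ j)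
      + (m ^ k / (2 * (Nat.factorial (k - 1)))) *
          ∫ u in (0:ℝ)..1,
            (1 - (u : ℂ)) ^ (k - 1) *
              (Complex.exp (m * ((n : ℂ) + b) * u) - Complex.exp (m * b * u)) *
              Complex.coth (m * u / 2) := by
  obtain ⟨K, rfl⟩ : ∃ K, k = K + 1 := ⟨k - 1, by omega⟩
  have hc (j : ℕ) (hj : j ≤ n) : (j : ℂ) + b ≠ 0 :=
    fun h => hb j hj (eq_neg_of_add_eq_zero_right h)
  have hb0 : b ≠ 0 := by simpa using hc 0 n.zero_le
  set S : ℂ → ℂ := fun c =>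
    ∑ j ∈ Icc 1 (K + 1), m ^ (K + 1 - j) / (K + 1 - j)! * (1 / c ^ j)
  have hJ (c : ℂ) (hc : c ≠ 0) := pow_div_factorial_mul_integral_one_sub_pow_mul_cexp m hc K
  have hT (c : ℂ) (hc : c ≠ 0) :
      1 / c ^ (K + 1) * ∑ r ∈ range (K + 1 + 1), (m * c) ^ r / r ! =
        S c + m ^ (K + 1) / (K + 1)! := by
    rw [sum_range_succ, mul_add, one_div_pow_mul_sum_range_mul_pow_div_factorial m hc, mul_pow]
    congr 1
    field_simp
  have hHP : ∑ j ∈ Icc 1 (K + 1), m ^ (K + 1 - j) / (K + 1 - j)! *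
      ∑ i ∈ Icc 1 n, (1 : ℂ) / ((i : ℂ) + b) ^ j = ∑ i ∈ Icc 1 n, S (i + b) := by
    simp only [S, mul_sum]
    exact sum_comm
  have hsum : m ^ (K + 1) / K ! * ∑ i ∈ Icc 1 n,
      (∫ u in (0 : ℝ)..1, (1 - (u : ℂ)) ^ K * exp (m * (i + b) * u)) =
      ∑ i ∈ Icc 1 n, exp (m * (i + b)) / ((i : ℂ) + b) ^ (K + 1) -
        ∑ i ∈ Icc 1 n, S (i + b) := by
    rw [mul_sum, ← sum_sub_distrib]
    exact sum_congr rfl fun i hi => hJ _ (hc i (mem_Icc.1 hi).2)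
  simp only [Nat.add_sub_cancel]
  rw [integral_one_sub_pow_mul_exp_sub_exp_mul_coth K hm n b]
  have hJn := hJ _ (hc n le_rfl)
  have hTn := hT _ (hc n le_rfl)
  -- `ring` would expand `(↑n + b) ^ (K + 1)` under the inverses, so `↑n + b` is made an atom
  generalize (n : ℂ) + b = c at hJn hTn ⊢
  linear_combination -hHP - hsum + hJn / 2 - hJ b hb0 / 2 - hT b hb0 / 2 + hTn / 2

theorem stmt_18 (k : ℕ) (hk : 1 ≤ k) (m : ℂ) (hm : m ≠ 0) (n : ℕ) (hn : 0 < n)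
    (b : ℂ) (hb : ∀ j : ℕ, j ≤ n → b ≠ -(j : ℂ)) :
    ∑ j ∈ Finset.Icc 1 n, Complex.exp (m * (j + b)) / ((j : ℂ) + b) ^ k =
      -(Complex.exp (m * b) / (2 * b ^ k))
      + Complex.exp (m * ((n : ℂ) + b)) / (2 * ((n : ℂ) + b) ^ k)
      + (1 / (2 * b ^ k)) * ∑ j ∈ Finset.range (k + 1), (m * b) ^ j / (Nat.factorial j)
      - (1 / (2 * ((n : ℂ) + b) ^ k)) *
          ∑ j ∈ Finset.range (k + 1), (m * ((n : ℂ) + b)) ^ j / (Nat.factorial j)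
      + (∑ j ∈ Finset.Icc 1 k,
          (m ^ (k - j) / (Nat.factorial (k - j))) *
            ∑ i ∈ Finset.Icc 1 n, (1 : ℂ) / ((i : ℂ) + b) ^ j)
      + (m ^ k / (2 * (Nat.factorial (k - 1)))) *
          ∫ u in (0:ℝ)..1,
            (1 - (u : ℂ)) ^ (k - 1) *
              (Complex.exp (m * ((n : ℂ) + b) * u) - Complex.exp (m * b * u)) *
              Complex.coth (m * u / 2) :=
  stmt_18_general k hk m hm n b hb
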